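/- Let 𝔅 be a closed bicategory, let A and B be 0-cells, and let F be a transformation of represented pseudofunctors 𝔅(A,−) → 𝔅(B,−) with components F_C and structure 2-cells K ⊙ F(X) → F(K ⊙ X). Then the structure 2-cells K ⊙ F(X) → F(K ⊙ X) are isomorphisms for all 1-cells K and X (i.e., F is a strong transformation) if and only if F admits a right adjoint transformation: a family of functors G_C : 𝔅(B,C) → 𝔅(A,C) with F_C left adjoint to G_C for each C, together with 2-cells K' ⊙ G(X') → G(K' ⊙ X'), natural, associative and unital, making G a transformation of represented pseudofunctors 𝔅(B,−) → 𝔅(A,−) compatible (via mates) with the structure 2-cells of F. -/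

import Mathlib

/-!
STATEMENT 11.  Let `𝔅` be a closed bicategory, `A`, `B` 0-cells and `F` a transformation of
represented pseudofunctors `𝔅(A,−) → 𝔅(B,−)` with components `F_C` and structure 2-cells
`K ⊙ F(X) → F(K ⊙ X)`.  The structure 2-cells are isomorphisms (`F` is strong) if and only
if `F` admits a right adjoint transformation: a family `G_C : 𝔅(B,C) → 𝔅(A,C)` with
`F_C ⊣ G_C`, together with structure 2-cells making `G` a transformation of represented
pseudofunctors `𝔅(B,−) → 𝔅(A,−)` which is compatible with the structure 2-cells of `F`
via mates (i.e. the mate of `G`'s structure 2-cell is a two-sided inverse of `F`'s).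

Conventions: a paper 1-cell `M : X → Y` is `M : x ⟶ y` and `L ⊙ M = M ≫ L`.
-/

open CategoryTheory CategoryTheory.Bicategory

universe w v u

variable {B : Type u} [Bicategory.{w, v} B]

/-- Precomposition `(− ⊙ M) : 𝔅(Y,C) → 𝔅(X,C)` with `M : x ⟶ y`. -/
@[simps]
def precompF {x y : B} (M : x ⟶ y) (c : B) : (y ⟶ c) ⥤ (x ⟶ c) where
  obj Z := M ≫ Z
  map θ := M ◁ θ

/-- Postcomposition `(M ⊙ −) : 𝔅(C,X) → 𝔅(C,Y)` with `M : x ⟶ y`. -/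
@[simps]
def postcompF {x y : B} (M : x ⟶ y) (c : B) : (c ⟶ x) ⥤ (c ⟶ y) where
  obj Z := Z ≫ M
  map θ := θ ▷ M

/-- A transformation structure on a family of functors `F_C : 𝔅(A,C) → 𝔅(B,C)` between
the represented pseudofunctors: structure 2-cells `K ⊙ F(X) ⟶ F(K ⊙ X)`, natural in `K`
and `X`, associative and unital. -/
structure TransData (a b : B) (F : ∀ c : B, (a ⟶ c) ⥤ (b ⟶ c)) where
  t : ∀ {c₁ c₂ : B} (K : c₁ ⟶ c₂) (X : a ⟶ c₁),
    (F c₁).obj X ≫ K ⟶ (F c₂).obj (X ≫ K)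
  natK : ∀ {c₁ c₂ : B} {K K' : c₁ ⟶ c₂} (κ : K ⟶ K') (X : a ⟶ c₁),
    ((F c₁).obj X ◁ κ) ≫ t K' X = t K X ≫ (F c₂).map (X ◁ κ)
  natX : ∀ {c₁ c₂ : B} (K : c₁ ⟶ c₂) {X X' : a ⟶ c₁} (ξ : X ⟶ X'),
    ((F c₁).map ξ ▷ K) ≫ t K X' = t K X ≫ (F c₂).map (ξ ▷ K)
  assoc : ∀ {c₁ c₂ c₃ : B} (K : c₁ ⟶ c₂) (L : c₂ ⟶ c₃) (X : a ⟶ c₁),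
    (t K X ▷ L) ≫ t L (X ≫ K) =
      (α_ ((F c₁).obj X) K L).hom ≫ t (K ≫ L) X ≫ (F c₃).map (α_ X K L).inv
  unital : ∀ {c₁ : B} (X : a ⟶ c₁),
    t (𝟙 c₁) X = (ρ_ ((F c₁).obj X)).hom ≫ (F c₁).map (ρ_ X).inv

/-- The mate, with respect to adjunctions `F_C ⊣ G_C`, of the structure 2-cell of a
transformation structure on the right adjoints `G`; it goes in the direction opposite
to the structure 2-cells of `F`. -/
def mateMap {a b : B} {F : ∀ c : B, (a ⟶ c) ⥤ (b ⟶ c)} {G : ∀ c : B, (b ⟶ c) ⥤ (a ⟶ c)}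
    (adjFG : ∀ c : B, F c ⊣ G c) (s' : TransData b a G)
    {c₁ c₂ : B} (K : c₁ ⟶ c₂) (X : a ⟶ c₁) :
    (F c₂).obj (X ≫ K) ⟶ (F c₁).obj X ≫ K :=
  ((adjFG c₂).homEquiv _ _).symm
    ((((adjFG c₁).unit.app X) ▷ K) ≫ s'.t K ((F c₁).obj X))

/-!
If `F` is strong, each component `F_C` is isomorphic to precomposition with `F_A(1_A)` through
the structure 2-cells `K ⊙ F(1_A) ≅ F(K)`, so closedness provides right adjoints `G_C`.
For any such adjoints, the structure 2-cells of `G` are the mates of the inverses of those of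
`F`. Their naturality, associativity and unitality follow from the axioms for `F` after
transposing along the adjunctions and cancelling the invertible structure 2-cells of `F`; and
the mate of a mate gives back the inverse structure 2-cells of `F`.
-/

namespace TransData

variable {a b : B} {F : ∀ c : B, (a ⟶ c) ⥤ (b ⟶ c)}

abbrev IsStrong (s : TransData a b F) : Prop :=
  ∀ {c₁ c₂ : B} (K : c₁ ⟶ c₂) (X : a ⟶ c₁), IsIso (s.t K X)

noncomputable def tIso (s : TransData a b F) (hs : s.IsStrong) {c₁ c₂ : B} (K : c₁ ⟶ c₂)
    (X : a ⟶ c₁) : (F c₁).obj X ≫ K ≅ (F c₂).obj (X ≫ K) :=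
  @asIso _ _ _ _ (s.t K X) (hs K X)

noncomputable def isoPrecompOfIsStrong (s : TransData a b F) (hs : s.IsStrong) (c : B) :
    precompF ((F a).obj (𝟙 a)) c ≅ F c :=
  NatIso.ofComponents (fun K => s.tIso hs K (𝟙 a) ≪≫ (F c).mapIso (λ_ K)) (fun {K K'} κ => by
    show (F a).obj (𝟙 a) ◁ κ ≫ s.t K' (𝟙 a) ≫ (F c).map (λ_ K').hom =
      (s.t K (𝟙 a) ≫ (F c).map (λ_ K).hom) ≫ (F c).map κ
    rw [reassoc_of% (s.natK κ (𝟙 a)), ← Functor.map_comp, leftUnitor_naturality,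
      Functor.map_comp, Category.assoc])

theorem isLeftAdjoint_of_isStrong (s : TransData a b F) (hs : s.IsStrong)
    (h : ∀ c : B, (precompF ((F a).obj (𝟙 a)) c).IsLeftAdjoint) (c : B) :
    (F c).IsLeftAdjoint :=
  Functor.isLeftAdjoint_of_iso (s.isoPrecompOfIsStrong hs c)

section RightAdjoint

variable {G : ∀ c : B, (b ⟶ c) ⥤ (a ⟶ c)} (adjFG : ∀ c : B, F c ⊣ G c)
  (s : TransData a b F)

theorem hom_ext_of_t_map_counit (hs : s.IsStrong) {c₁ c₂ : B} {K : c₁ ⟶ c₂} {Z : a ⟶ c₁}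
    {W : b ⟶ c₂} {f g : Z ≫ K ⟶ (G c₂).obj W}
    (h : s.t K Z ≫ (F c₂).map f ≫ (adjFG c₂).counit.app W =
      s.t K Z ≫ (F c₂).map g ≫ (adjFG c₂).counit.app W) :
    f = g := by
  have := hs K Z
  apply ((adjFG c₂).homEquiv _ _).symm.injective
  simpa only [Adjunction.homEquiv_counit, cancel_epi] using h

noncomputable def rightAdjointT (hs : s.IsStrong) {c₁ c₂ : B} (K : c₁ ⟶ c₂) (Y : b ⟶ c₁) :
    (G c₁).obj Y ≫ K ⟶ (G c₂).obj (Y ≫ K) :=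
  (adjFG c₂).homEquiv _ _ ((s.tIso hs K ((G c₁).obj Y)).inv ≫ (adjFG c₁).counit.app Y ▷ K)

theorem t_map_rightAdjointT_counit (hs : s.IsStrong) {c₁ c₂ : B} (K : c₁ ⟶ c₂) (Y : b ⟶ c₁) :
    s.t K ((G c₁).obj Y) ≫ (F c₂).map (rightAdjointT adjFG s hs K Y) ≫
      (adjFG c₂).counit.app (Y ≫ K) = (adjFG c₁).counit.app Y ▷ K := by
  have h := ((adjFG c₂).homEquiv_apply_eq _ (rightAdjointT adjFG s hs K Y)).mp rfl
  rw [Adjunction.homEquiv_counit] at h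
  rw [← h]
  exact (s.tIso hs K _).hom_inv_id_assoc _

noncomputable def rightAdjoint (hs : s.IsStrong) : TransData b a G where
  t := rightAdjointT adjFG s hs
  natK {c₁ c₂ K K'} κ Y := by
    apply s.hom_ext_of_t_map_counit adjFG hs
    simp only [Functor.map_comp, Category.assoc]
    rw [← reassoc_of% (s.natK κ ((G c₁).obj Y)), t_map_rightAdjointT_counit,
      (adjFG c₂).counit_naturality (Y ◁ κ),
      reassoc_of% (s.t_map_rightAdjointT_counit adjFG hs K Y)]
    exact whisker_exchange _ _
  natX {c₁ c₂} K {Y Y'} η := by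
    apply s.hom_ext_of_t_map_counit adjFG hs
    simp only [Functor.map_comp, Category.assoc]
    rw [← reassoc_of% (s.natX K ((G c₁).map η)), t_map_rightAdjointT_counit,
      (adjFG c₂).counit_naturality (η ▷ K),
      reassoc_of% (s.t_map_rightAdjointT_counit adjFG hs K Y), ← comp_whiskerRight,
      (adjFG c₁).counit_naturality η, comp_whiskerRight]
  assoc {c₁ c₂ c₃} K L Y := by
    have := hs K ((G c₁).obj Y)
    apply s.hom_ext_of_t_map_counit adjFG hs
    rw [← cancel_epi (s.t K ((G c₁).obj Y) ▷ L)]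
    simp only [Functor.map_comp, Category.assoc]
    rw [← reassoc_of% (s.natX L (rightAdjointT adjFG s hs K Y)), t_map_rightAdjointT_counit,
      ← comp_whiskerRight, ← comp_whiskerRight, t_map_rightAdjointT_counit,
      reassoc_of% (s.assoc K L ((G c₁).obj Y)),
      ← Functor.map_comp_assoc, Iso.inv_hom_id, CategoryTheory.Functor.map_id, Category.id_comp,
      (adjFG c₃).counit_naturality (α_ Y K L).inv,
      reassoc_of% (s.t_map_rightAdjointT_counit adjFG hs (K ≫ L) Y),
      ← associator_naturality_left_assoc, Iso.hom_inv_id, Category.comp_id]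
  unital {c} Y := by
    apply s.hom_ext_of_t_map_counit adjFG hs
    rw [t_map_rightAdjointT_counit, Functor.map_comp, Category.assoc,
      (adjFG c).counit_naturality (ρ_ Y).inv, s.unital, Category.assoc,
      ← Functor.map_comp_assoc, Iso.inv_hom_id, CategoryTheory.Functor.map_id, Category.id_comp,
      ← rightUnitor_naturality_assoc, Iso.hom_inv_id, Category.comp_id]

theorem t_comp_mateMap_rightAdjoint (hs : s.IsStrong) {c₁ c₂ : B} (K : c₁ ⟶ c₂) (X : a ⟶ c₁) :
    s.t K X ≫ mateMap adjFG (s.rightAdjoint adjFG hs) K X = 𝟙 _ := by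
  rw [mateMap, rightAdjoint, Adjunction.homEquiv_counit, Functor.map_comp, Category.assoc,
    ← reassoc_of% (s.natX K ((adjFG c₁).unit.app X)), t_map_rightAdjointT_counit,
    ← comp_whiskerRight, Adjunction.left_triangle_components, id_whiskerRight]

theorem mateMap_rightAdjoint_comp_t (hs : s.IsStrong) {c₁ c₂ : B} (K : c₁ ⟶ c₂) (X : a ⟶ c₁) :
    mateMap adjFG (s.rightAdjoint adjFG hs) K X ≫ s.t K X = 𝟙 _ := by
  have := hs K X
  rw [IsIso.eq_inv_of_hom_inv_id (s.t_comp_mateMap_rightAdjoint adjFG hs K X), IsIso.inv_hom_id]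

end RightAdjoint

end TransData

theorem strong_iff_right_adjoint_transformation_general
    -- the closed structure on `𝔅`
    (rt : ∀ {x y : B} (M : x ⟶ y) (c : B), (x ⟶ c) ⥤ (y ⟶ c))
    (adj : ∀ {x y : B} (M : x ⟶ y) (c : B), precompF M c ⊣ rt M c)
    (a b : B) (F : ∀ c : B, (a ⟶ c) ⥤ (b ⟶ c)) (s : TransData a b F) :
    (∀ {c₁ c₂ : B} (K : c₁ ⟶ c₂) (X : a ⟶ c₁), IsIso (s.t K X)) ↔
      (∃ (G : ∀ c : B, (b ⟶ c) ⥤ (a ⟶ c)) (adjFG : ∀ c : B, F c ⊣ G c)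
        (s' : TransData b a G),
        ∀ {c₁ c₂ : B} (K : c₁ ⟶ c₂) (X : a ⟶ c₁),
          s.t K X ≫ mateMap adjFG s' K X = 𝟙 _ ∧
          mateMap adjFG s' K X ≫ s.t K X = 𝟙 _) := by
  constructor
  · intro hs
    have := s.isLeftAdjoint_of_isStrong hs fun c => ⟨_, ⟨adj _ c⟩⟩
    let adjFG := fun c => Adjunction.ofIsLeftAdjoint (F c)
    exact ⟨_, adjFG, s.rightAdjoint adjFG hs, fun K X =>
      ⟨s.t_comp_mateMap_rightAdjoint adjFG hs K X, s.mateMap_rightAdjoint_comp_t adjFG hs K X⟩⟩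
  · rintro ⟨G, adjFG, s', h⟩ c₁ c₂ K X
    exact ⟨mateMap adjFG s' K X, h K X⟩

theorem strong_iff_right_adjoint_transformation
    -- the closed structure on `𝔅`
    (rt : ∀ {x y : B} (M : x ⟶ y) (c : B), (x ⟶ c) ⥤ (y ⟶ c))
    (adj : ∀ {x y : B} (M : x ⟶ y) (c : B), precompF M c ⊣ rt M c)
    (lt : ∀ {x y : B} (M : x ⟶ y) (c : B), (c ⟶ y) ⥤ (c ⟶ x))
    (adjL : ∀ {x y : B} (M : x ⟶ y) (c : B), postcompF M c ⊣ lt M c)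
    (a b : B) (F : ∀ c : B, (a ⟶ c) ⥤ (b ⟶ c)) (s : TransData a b F) :
    (∀ {c₁ c₂ : B} (K : c₁ ⟶ c₂) (X : a ⟶ c₁), IsIso (s.t K X)) ↔
      (∃ (G : ∀ c : B, (b ⟶ c) ⥤ (a ⟶ c)) (adjFG : ∀ c : B, F c ⊣ G c)
        (s' : TransData b a G),
        ∀ {c₁ c₂ : B} (K : c₁ ⟶ c₂) (X : a ⟶ c₁),
          s.t K X ≫ mateMap adjFG s' K X = 𝟙 _ ∧
          mateMap adjFG s' K X ≫ s.t K X = 𝟙 _) :=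
  strong_iff_right_adjoint_transformation_general rt adj a b F s
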